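/- arXiv:1605.01091 — 2 statements merged into one kernel-verified Lean document; each statement's English description precedes it below -/
import Mathlib

section
/- For 1 ≤ p ≤ ∞, the resistance perturbation distance d_{rp(p)}(G⁽¹⁾, G⁽²⁾) = ‖R⁽¹⁾ − R⁽²⁾‖_p (the entrywise p-norm of the difference of effective resistance matrices) is a metric on the space of connected, weighted, undirected graphs on a fixed vertex set. -/
open Matrix Finset

/-- `A` is a (weighted) adjacency matrix: symmetric, nonnegative, no self-loops. -/
def IsAdjMat {n : ℕ} (A : Matrix (Fin n) (Fin n) ℝ) : Prop :=
  A.IsSymm ∧ (∀ i j, 0 ≤ A i j) ∧ ∀ i, A i i = 0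

/-- Combinatorial Laplacian `L = D - A`. -/
def lap {n : ℕ} (A : Matrix (Fin n) (Fin n) ℝ) : Matrix (Fin n) (Fin n) ℝ :=
  Matrix.diagonal (fun i => ∑ j, A i j) - A

/-- Connectivity: the kernel of the Laplacian is spanned by the all-ones vector. -/
def IsConnectedLap {n : ℕ} (L : Matrix (Fin n) (Fin n) ℝ) : Prop :=
  ∀ v : Fin n → ℝ, L.mulVec v = 0 → ∃ c : ℝ, v = fun _ => c

/-- `Ld` is the Moore–Penrose pseudoinverse of `L`. -/
def IsMoorePenrose {n : ℕ} (L Ld : Matrix (Fin n) (Fin n) ℝ) : Prop :=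
  L * Ld * L = L ∧ Ld * L * Ld = Ld ∧ (L * Ld)ᵀ = L * Ld ∧ (Ld * L)ᵀ = Ld * L

/-- Effective resistance `R_ij = L†_ii + L†_jj - 2 L†_ij`. -/
def effR {n : ℕ} (Ld : Matrix (Fin n) (Fin n) ℝ) (i j : Fin n) : ℝ :=
  Ld i i + Ld j j - 2 * Ld i j

/-- The matrix of effective resistances. -/
def Rmat {n : ℕ} (Ld : Matrix (Fin n) (Fin n) ℝ) : Matrix (Fin n) (Fin n) ℝ :=
  Matrix.of fun i j => effR Ld i j

/-- Entrywise p-norm distance between resistance matrices, `1 ≤ p < ∞`. -/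
noncomputable def drpP {n : ℕ} (p : ℝ) (R₁ R₂ : Matrix (Fin n) (Fin n) ℝ) : ℝ :=
  (∑ i, ∑ j, |R₁ i j - R₂ i j| ^ p) ^ (1 / p)

/-- Entrywise ∞-norm distance between resistance matrices. -/
noncomputable def drpInf {n : ℕ} (R₁ R₂ : Matrix (Fin n) (Fin n) ℝ) : ℝ :=
  ⨆ i : Fin n, ⨆ j : Fin n, |R₁ i j - R₂ i j|

/-!
Both distances are the `ℓᵖ` metric on matrices pulled back along `A ↦ R`, so the metric axioms
reduce to injectivity of `A ↦ R`. Since `L† 1 = 0`, the row sums of `R` determine the diagonal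
of `L†` and then all of `L†`; uniqueness of the Moore–Penrose inverse gives `L = (L†)†`; and
`A` is minus the off-diagonal part of `L`.
-/

open scoped ENNReal

namespace IsMoorePenrose

variable {n : ℕ} {L Ld M : Matrix (Fin n) (Fin n) ℝ}

lemma symm (h : IsMoorePenrose L Ld) : IsMoorePenrose Ld L :=
  ⟨h.2.1, h.1, h.2.2.2, h.2.2.1⟩

lemma unique (hLd : IsMoorePenrose L Ld) (hM : IsMoorePenrose L M) : Ld = M := by
  obtain ⟨h1, h2, h3, h4⟩ := hLd
  obtain ⟨g1, g2, g3, g4⟩ := hM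
  have hleft : L * M = L * Ld :=
    calc L * M = (L * Ld * L * M)ᵀ := by rw [h1, g3]
      _ = (L * M) * (L * Ld) := by
        rw [show L * Ld * L * M = (L * Ld) * (L * M) by simp only [mul_assoc], transpose_mul,
          g3, h3]
      _ = L * Ld := by rw [← mul_assoc, g1]
  have hright : M * L = Ld * L :=
    calc M * L = (M * (L * Ld * L))ᵀ := by rw [h1, g4]
      _ = (Ld * L) * (M * L) := by
        rw [show M * (L * Ld * L) = (M * L) * (Ld * L) by simp only [mul_assoc], transpose_mul,
          g4, h4]
      _ = Ld * L := by rw [mul_assoc, ← mul_assoc L, g1]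
  calc Ld = Ld * (L * M) := by rw [hleft, ← mul_assoc, h2]
    _ = M := by rw [← mul_assoc, ← hright, g2]

/-- `Ld = Ld (L Ld)ᵀ = Ld Ldᵀ Lᵀ`, so `Ld` kills the kernel of `Lᵀ`. -/
lemma mulVec_eq_zero (h : IsMoorePenrose L Ld) {v : Fin n → ℝ} (hv : Lᵀ *ᵥ v = 0) :
    Ld *ᵥ v = 0 := by
  have hfactor : Ld = Ld * Ldᵀ * Lᵀ := by
    rw [mul_assoc, ← transpose_mul, h.2.2.1, ← mul_assoc, h.2.1]
  rw [hfactor, ← mulVec_mulVec, hv, mulVec_zero]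

end IsMoorePenrose

section Laplacian

variable {n : ℕ} {A A₁ A₂ : Matrix (Fin n) (Fin n) ℝ}

lemma lap_transpose (hA : A.IsSymm) : (lap A)ᵀ = lap A := by
  rw [lap, transpose_sub, diagonal_transpose, hA.eq]

lemma lap_mulVec_one (A : Matrix (Fin n) (Fin n) ℝ) : lap A *ᵥ 1 = 0 := by
  ext i
  simp [lap, mulVec, dotProduct, diagonal_apply]

lemma eq_of_lap_eq (h₁ : ∀ i, A₁ i i = 0) (h₂ : ∀ i, A₂ i i = 0) (h : lap A₁ = lap A₂) :
    A₁ = A₂ := by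
  ext i j
  rcases eq_or_ne i j with rfl | hij
  · rw [h₁, h₂]
  · simpa [lap, diagonal_apply_ne _ hij] using congrFun (congrFun h i) j

end Laplacian

section Resistance

variable {n : ℕ} {Ld Ld₁ Ld₂ : Matrix (Fin n) (Fin n) ℝ}

lemma sum_Rmat_row (h : Ld *ᵥ 1 = 0) (i : Fin n) :
    ∑ k, Rmat Ld i k = n * Ld i i + trace Ld := by
  have hrow : ∑ k, Ld i k = 0 := by simpa [mulVec, dotProduct] using congrFun h i
  simp only [Rmat, effR, of_apply, sum_sub_distrib, sum_add_distrib, ← mul_sum, hrow]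
  simp [trace]

lemma sum_Rmat (h : Ld *ᵥ 1 = 0) : ∑ i, ∑ k, Rmat Ld i k = 2 * n * trace Ld := by
  simp only [sum_Rmat_row h, sum_add_distrib, ← mul_sum]
  simp [trace]
  ring

lemma eq_of_Rmat_eq (h₁ : Ld₁ *ᵥ 1 = 0) (h₂ : Ld₂ *ᵥ 1 = 0) (hR : Rmat Ld₁ = Rmat Ld₂) :
    Ld₁ = Ld₂ := by
  rcases Nat.eq_zero_or_pos n with rfl | hn
  · exact Subsingleton.elim _ _
  have hn' : (n : ℝ) ≠ 0 := by positivity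
  have htrace : trace Ld₁ = trace Ld₂ := by
    have h := sum_Rmat h₁
    rw [hR, sum_Rmat h₂] at h
    exact (mul_left_cancel₀ (by positivity) h).symm
  have hdiag (i : Fin n) : Ld₁ i i = Ld₂ i i := by
    have h := sum_Rmat_row h₁ i
    rw [hR, sum_Rmat_row h₂ i, htrace, add_left_inj] at h
    exact (mul_left_cancel₀ hn' h).symm
  ext i j
  have h := congrFun (congrFun hR i) j
  simp only [Rmat, effR, of_apply, hdiag] at h
  linarith

end Resistance

section EntrywiseNorm

variable {m n : Type*}

def entrywiseLp (p : ℝ≥0∞) (R : Matrix m n ℝ) : PiLp p fun _ : m => PiLp p fun _ : n => ℝ :=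
  WithLp.toLp p fun i => WithLp.toLp p (R i)

lemma entrywiseLp_injective (p : ℝ≥0∞) :
    Function.Injective (entrywiseLp p : Matrix m n ℝ → _) :=
  fun _ _ h => funext fun i => WithLp.toLp_injective p (congrFun (WithLp.toLp_injective p h) i)

end EntrywiseNorm

section Distance

variable {n : ℕ} (R₁ R₂ : Matrix (Fin n) (Fin n) ℝ)

lemma drpP_eq_dist {p : ℝ} (hp : 0 < p) :
    drpP p R₁ R₂ =
      dist (entrywiseLp (ENNReal.ofReal p) R₁) (entrywiseLp (ENNReal.ofReal p) R₂) := by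
  have hp' : 0 < (ENNReal.ofReal p).toReal := by rwa [ENNReal.toReal_ofReal hp.le]
  simp only [PiLp.dist_eq_sum hp', ENNReal.toReal_ofReal hp.le, entrywiseLp, Real.dist_eq,
    drpP]
  congr 1
  refine sum_congr rfl fun i _ => ?_
  rw [← Real.rpow_mul (by positivity), one_div_mul_cancel hp.ne', Real.rpow_one]

lemma drpInf_eq_dist : drpInf R₁ R₂ = dist (entrywiseLp ∞ R₁) (entrywiseLp ∞ R₂) := by
  simp only [PiLp.dist_eq_iSup, entrywiseLp, Real.dist_eq, drpInf]

end Distance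

lemma Rmat_eq_Rmat_iff {n : ℕ} {A₁ A₂ Ld₁ Ld₂ : Matrix (Fin n) (Fin n) ℝ}
    (hs₁ : A₁.IsSymm) (hd₁ : ∀ i, A₁ i i = 0) (hMP₁ : IsMoorePenrose (lap A₁) Ld₁)
    (hs₂ : A₂.IsSymm) (hd₂ : ∀ i, A₂ i i = 0) (hMP₂ : IsMoorePenrose (lap A₂) Ld₂) :
    Rmat Ld₁ = Rmat Ld₂ ↔ A₁ = A₂ := by
  constructor
  · intro hR
    have hker₁ := hMP₁.mulVec_eq_zero (by rw [lap_transpose hs₁, lap_mulVec_one])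
    have hker₂ := hMP₂.mulVec_eq_zero (by rw [lap_transpose hs₂, lap_mulVec_one])
    have hLd : Ld₁ = Ld₂ := eq_of_Rmat_eq hker₁ hker₂ hR
    have hlap : lap A₁ = lap A₂ := hMP₁.symm.unique (hLd ▸ hMP₂.symm)
    exact eq_of_lap_eq hd₁ hd₂ hlap
  · rintro rfl
    rw [hMP₁.unique hMP₂]

theorem rp_distance_is_metric_general (n : ℕ) (p : ℝ) (hp : 1 ≤ p)
    (A₁ L₁ Ld₁ A₂ L₂ Ld₂ Ld₃ : Matrix (Fin n) (Fin n) ℝ)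
    (hA₁ : IsAdjMat A₁) (hL₁ : L₁ = lap A₁)
    (hMP₁ : IsMoorePenrose L₁ Ld₁)
    (hA₂ : IsAdjMat A₂) (hL₂ : L₂ = lap A₂)
    (hMP₂ : IsMoorePenrose L₂ Ld₂) :
    (0 ≤ drpP p (Rmat Ld₁) (Rmat Ld₂))
    ∧ (drpP p (Rmat Ld₁) (Rmat Ld₂) = drpP p (Rmat Ld₂) (Rmat Ld₁))
    ∧ (drpP p (Rmat Ld₁) (Rmat Ld₃)
        ≤ drpP p (Rmat Ld₁) (Rmat Ld₂) + drpP p (Rmat Ld₂) (Rmat Ld₃))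
    ∧ (drpP p (Rmat Ld₁) (Rmat Ld₂) = 0 ↔ A₁ = A₂)
    ∧ (0 ≤ drpInf (Rmat Ld₁) (Rmat Ld₂))
    ∧ (drpInf (Rmat Ld₁) (Rmat Ld₂) = drpInf (Rmat Ld₂) (Rmat Ld₁))
    ∧ (drpInf (Rmat Ld₁) (Rmat Ld₃)
        ≤ drpInf (Rmat Ld₁) (Rmat Ld₂) + drpInf (Rmat Ld₂) (Rmat Ld₃))
    ∧ (drpInf (Rmat Ld₁) (Rmat Ld₂) = 0 ↔ A₁ = A₂) := by
  subst hL₁ hL₂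
  have hR : Rmat Ld₁ = Rmat Ld₂ ↔ A₁ = A₂ :=
    Rmat_eq_Rmat_iff hA₁.1 hA₁.2.2 hMP₁ hA₂.1 hA₂.2.2 hMP₂
  have : Fact (1 ≤ ENNReal.ofReal p) := ⟨by simpa using hp⟩
  simp only [drpP_eq_dist _ _ (zero_lt_one.trans_le hp), drpInf_eq_dist]
  exact ⟨dist_nonneg, dist_comm _ _, dist_triangle _ _ _,
    dist_eq_zero.trans ((entrywiseLp_injective _).eq_iff.trans hR),
    dist_nonneg, dist_comm _ _, dist_triangle _ _ _,
    dist_eq_zero.trans ((entrywiseLp_injective _).eq_iff.trans hR)⟩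

/-- For `1 ≤ p ≤ ∞` the resistance perturbation distance is a metric on the space of
connected weighted undirected graphs on a fixed vertex set: nonnegativity, identity of
indiscernibles, symmetry and the triangle inequality hold (both for finite `p` and for
`p = ∞`). -/
theorem rp_distance_is_metric (n : ℕ) (hn : 0 < n) (p : ℝ) (hp : 1 ≤ p)
    (A₁ L₁ Ld₁ A₂ L₂ Ld₂ A₃ L₃ Ld₃ : Matrix (Fin n) (Fin n) ℝ)
    (hA₁ : IsAdjMat A₁) (hL₁ : L₁ = lap A₁) (hc₁ : IsConnectedLap L₁)
    (hMP₁ : IsMoorePenrose L₁ Ld₁)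
    (hA₂ : IsAdjMat A₂) (hL₂ : L₂ = lap A₂) (hc₂ : IsConnectedLap L₂)
    (hMP₂ : IsMoorePenrose L₂ Ld₂)
    (hA₃ : IsAdjMat A₃) (hL₃ : L₃ = lap A₃) (hc₃ : IsConnectedLap L₃)
    (hMP₃ : IsMoorePenrose L₃ Ld₃) :
    (0 ≤ drpP p (Rmat Ld₁) (Rmat Ld₂))
    ∧ (drpP p (Rmat Ld₁) (Rmat Ld₂) = drpP p (Rmat Ld₂) (Rmat Ld₁))
    ∧ (drpP p (Rmat Ld₁) (Rmat Ld₃)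
        ≤ drpP p (Rmat Ld₁) (Rmat Ld₂) + drpP p (Rmat Ld₂) (Rmat Ld₃))
    ∧ (drpP p (Rmat Ld₁) (Rmat Ld₂) = 0 ↔ A₁ = A₂)
    ∧ (0 ≤ drpInf (Rmat Ld₁) (Rmat Ld₂))
    ∧ (drpInf (Rmat Ld₁) (Rmat Ld₂) = drpInf (Rmat Ld₂) (Rmat Ld₁))
    ∧ (drpInf (Rmat Ld₁) (Rmat Ld₃)
        ≤ drpInf (Rmat Ld₁) (Rmat Ld₂) + drpInf (Rmat Ld₂) (Rmat Ld₃))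
    ∧ (drpInf (Rmat Ld₁) (Rmat Ld₂) = 0 ↔ A₁ = A₂) :=
  rp_distance_is_metric_general n p hp A₁ L₁ Ld₁ A₂ L₂ Ld₂ Ld₃ hA₁ hL₁ hMP₁ hA₂ hL₂ hMP₂
end

section
/- For the star graph S_n, perturbing the edge [1, i₀] from the hub 1 to a leaf i₀ by Δ > −1 gives d_{rp(1)}(S_n, S_n + Δ_{1 i₀}) = 2(n−1)|Δ|/(1 + Δ), and adding an edge of weight Δ ≥ 0 between two leaves i₀ and j₀ gives d_{rp(1)}(S_n, S_n + Δ_{i₀j₀}) = 4nΔ/(1 + 2Δ). -/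
open Matrix Finset

/-- Adjacency matrix of the unweighted complete graph `K_n`. -/
def completeAdj (n : ℕ) : Matrix (Fin n) (Fin n) ℝ :=
  Matrix.of fun i j => if i = j then 0 else 1

/-- Symmetric single-edge perturbation matrix: adds `Δ` to the weight of edge `[i₀, j₀]`. -/
def edgePert {n : ℕ} (i₀ j₀ : Fin n) (Δ : ℝ) : Matrix (Fin n) (Fin n) ℝ :=
  Matrix.of fun i j => if (i = i₀ ∧ j = j₀) ∨ (i = j₀ ∧ j = i₀) then Δ else 0

/-- Adjacency matrix of the unweighted star graph `S_n` with hub the vertex of index 0. -/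
def starAdj (n : ℕ) : Matrix (Fin n) (Fin n) ℝ :=
  Matrix.of fun i j => if i ≠ j ∧ (i.val = 0 ∨ j.val = 0) then 1 else 0

/-- Adjacency matrix of the unweighted path graph `P_n` on vertices `0, …, n-1`. -/
def pathAdj (n : ℕ) : Matrix (Fin n) (Fin n) ℝ :=
  Matrix.of fun i j => if i.val + 1 = j.val ∨ j.val + 1 = i.val then 1 else 0

/-- Adjacency matrix of the unweighted cycle graph `C_n`. -/
def cycleAdj (n : ℕ) : Matrix (Fin n) (Fin n) ℝ :=
  Matrix.of fun i j => if (i.val + 1) % n = j.val ∨ (j.val + 1) % n = i.val then 1 else 0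

/-!
The star Laplacian is `L = I - e 1ᵀ - 1 eᵀ + n e eᵀ`, where `e` is the indicator of the hub, and
its pseudoinverse lies in the span of `I, 1 1ᵀ, e 1ᵀ, 1 eᵀ, e eᵀ`. Both perturbations are of rank
one, `L + Δ u uᵀ` with `u ⟂ 1`, so a Sherman–Morrison argument gives the perturbed pseudoinverse
`L† - c (L†u)(L†u)ᵀ` with `c = Δ / (1 + Δ uᵀL†u)`. Every effective resistance thus changes by
`c ((L†u)_i - (L†u)_j)²`, all with the same sign, and since `L†u ⟂ 1` the sum over ordered pairs is
`2n |c| ‖L†u‖²`. Finally `L†u = 1/n - e_a` for the hub–leaf edge `[hub, a]` and `L†u = u` for an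
edge between two leaves.
-/

section

variable {n : ℕ}

theorem IsMoorePenrose.unique_s9 {L X Y : Matrix (Fin n) (Fin n) ℝ}
    (hX : IsMoorePenrose L X) (hY : IsMoorePenrose L Y) : X = Y := by
  obtain ⟨hLXL, hXLX, hLX, hXL⟩ := hX
  obtain ⟨hLYL, hYLY, hLY, hYL⟩ := hY
  have hLX_eq : L * X = L * Y := calc
    L * X = (L * Y * L * X)ᵀ := by rw [hLYL, hLX]
    _ = (L * X)ᵀ * (L * Y)ᵀ := by rw [Matrix.mul_assoc (L * Y), transpose_mul]
    _ = L * Y := by rw [hLX, hLY, ← Matrix.mul_assoc, hLXL]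
  have hXL_eq : X * L = Y * L := calc
    X * L = (X * L * Y * L)ᵀ := by rw [Matrix.mul_assoc X L Y, Matrix.mul_assoc X, hLYL, hXL]
    _ = (Y * L)ᵀ * (X * L)ᵀ := by rw [Matrix.mul_assoc, transpose_mul]
    _ = Y * L := by rw [hXL, hYL, Matrix.mul_assoc, ← Matrix.mul_assoc L, hLXL]
  calc X = X * L * X := hXLX.symm
    _ = Y * L * Y := by rw [hXL_eq, Matrix.mul_assoc, hLX_eq, ← Matrix.mul_assoc]
    _ = Y := hYLY

lemma effR_sub (A B : Matrix (Fin n) (Fin n) ℝ) (i j : Fin n) :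
    effR (A - B) i j = effR A i j - effR B i j := by
  simp only [effR, Matrix.sub_apply]
  ring

lemma effR_smul_vecMulVec_self (c : ℝ) (v : Fin n → ℝ) (i j : Fin n) :
    effR (c • vecMulVec v v) i j = c * (v i - v j) ^ 2 := by
  simp only [effR, Matrix.smul_apply, vecMulVec_apply, smul_eq_mul]
  ring

lemma sum_sum_sq_sub_of_one_dotProduct_eq_zero {v : Fin n → ℝ} (hv : 1 ⬝ᵥ v = 0) :
    ∑ i, ∑ j, (v i - v j) ^ 2 = 2 * n * (v ⬝ᵥ v) := by
  rw [one_dotProduct] at hv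
  simp only [dotProduct, ← sq, sub_sq, Finset.sum_add_distrib, Finset.sum_sub_distrib,
    Finset.sum_const, Finset.card_univ, Fintype.card_fin, nsmul_eq_mul, ← Finset.mul_sum,
    ← Finset.sum_mul, hv]
  ring

/-- The shape of the pair `(L, L†)` for the Laplacian `L` of a connected graph. -/
structure IsCenteredInverse (L M : Matrix (Fin n) (Fin n) ℝ) : Prop where
  transpose_left : Lᵀ = L
  transpose_right : Mᵀ = M
  mul_eq : L * M = 1 - (n : ℝ)⁻¹ • vecMulVec 1 1
  mulVec_one_left : L *ᵥ 1 = 0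
  mulVec_one_right : M *ᵥ 1 = 0

namespace IsCenteredInverse

variable {L M : Matrix (Fin n) (Fin n) ℝ}

lemma one_dotProduct_mulVec_right (h : IsCenteredInverse L M) (x : Fin n → ℝ) :
    1 ⬝ᵥ M *ᵥ x = 0 := by
  rw [dotProduct_mulVec, ← mulVec_transpose, h.transpose_right, h.mulVec_one_right,
    zero_dotProduct]

lemma vecMulVec_one_one_mul_left (h : IsCenteredInverse L M) : vecMulVec 1 1 * L = 0 := by
  rw [vecMulVec_mul, ← mulVec_transpose, h.transpose_left, h.mulVec_one_left, vecMulVec_zero]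

lemma vecMulVec_one_one_mul_right (h : IsCenteredInverse L M) : vecMulVec 1 1 * M = 0 := by
  rw [vecMulVec_mul, ← mulVec_transpose, h.transpose_right, h.mulVec_one_right, vecMulVec_zero]

lemma commute (h : IsCenteredInverse L M) : Commute L M := by
  calc L * M = (L * M)ᵀ := by
        rw [h.mul_eq, transpose_sub, transpose_one, transpose_smul, transpose_vecMulVec]
    _ = M * L := by rw [transpose_mul, h.transpose_left, h.transpose_right]

theorem isMoorePenrose (h : IsCenteredInverse L M) : IsMoorePenrose L M := by
  have hsymm : (L * M)ᵀ = L * M := by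
    rw [transpose_mul, h.transpose_left, h.transpose_right, h.commute.eq.symm]
  refine ⟨?_, ?_, hsymm, by rw [h.commute.eq.symm, hsymm]⟩
  · rw [h.mul_eq, sub_mul, one_mul, smul_mul, h.vecMulVec_one_one_mul_left, smul_zero, sub_zero]
  · rw [h.commute.eq.symm, h.mul_eq, sub_mul, one_mul, smul_mul, h.vecMulVec_one_one_mul_right,
      smul_zero, sub_zero]

theorem add_smul_vecMulVec (h : IsCenteredInverse L M) {u : Fin n → ℝ} (hu : 1 ⬝ᵥ u = 0)
    {Δ : ℝ} (hΔ : 1 + Δ * (u ⬝ᵥ M *ᵥ u) ≠ 0) :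
    IsCenteredInverse (L + Δ • vecMulVec u u)
      (M - (Δ / (1 + Δ * (u ⬝ᵥ M *ᵥ u))) • vecMulVec (M *ᵥ u) (M *ᵥ u)) := by
  set v := M *ᵥ u
  set c := Δ / (1 + Δ * (u ⬝ᵥ v))
  have hLv : L *ᵥ v = u := by
    rw [mulVec_mulVec, h.mul_eq, sub_mulVec, one_mulVec, smul_mulVec, vecMulVec_mulVec, hu]
    simp
  have huM : u ᵥ* M = v := by rw [← mulVec_transpose, h.transpose_right]
  have hc : c * (1 + Δ * (u ⬝ᵥ v)) = Δ := div_mul_cancel₀ _ hΔ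
  constructor
  · rw [transpose_add, h.transpose_left, transpose_smul, transpose_vecMulVec]
  · rw [transpose_sub, h.transpose_right, transpose_smul, transpose_vecMulVec]
  · calc (L + Δ • vecMulVec u u) * (M - c • vecMulVec v v)
        = L * M + (Δ - c * (1 + Δ * (u ⬝ᵥ v))) • vecMulVec u v := by
          rw [add_mul, mul_sub, mul_sub, Matrix.mul_smul, mul_vecMulVec, hLv, smul_mul,
            vecMulVec_mul, huM, smul_mul, Matrix.mul_smul, vecMulVec_mul_vecMulVec, vecMulVec_smul,
            smul_smul]
          module
      _ = 1 - (n : ℝ)⁻¹ • vecMulVec 1 1 := by rw [hc, sub_self, zero_smul, add_zero, h.mul_eq]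
  · rw [add_mulVec, h.mulVec_one_left, smul_mulVec, vecMulVec_mulVec, dotProduct_comm, hu]
    simp
  · rw [sub_mulVec, h.mulVec_one_right, smul_mulVec, vecMulVec_mulVec, dotProduct_comm,
      h.one_dotProduct_mulVec_right]
    simp

theorem sum_abs_effR_sub_add_smul_vecMulVec (h : IsCenteredInverse L M) {u : Fin n → ℝ}
    (hu : 1 ⬝ᵥ u = 0) {Δ : ℝ} (hΔ : 1 + Δ * (u ⬝ᵥ M *ᵥ u) ≠ 0)
    {Ld Ld' : Matrix (Fin n) (Fin n) ℝ} (hLd : IsMoorePenrose L Ld)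
    (hLd' : IsMoorePenrose (L + Δ • vecMulVec u u) Ld') :
    ∑ i, ∑ j, |effR Ld i j - effR Ld' i j|
      = 2 * n * |Δ / (1 + Δ * (u ⬝ᵥ M *ᵥ u))| * (M *ᵥ u ⬝ᵥ M *ᵥ u) := by
  rw [hLd.unique_s9 h.isMoorePenrose, hLd'.unique_s9 (h.add_smul_vecMulVec hu hΔ).isMoorePenrose]
  simp_rw [effR_sub, sub_sub_cancel, effR_smul_vecMulVec_self, abs_mul, abs_sq,
    ← Finset.mul_sum, sum_sum_sq_sub_of_one_dotProduct_eq_zero (h.one_dotProduct_mulVec_right u)]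
  rw [mul_left_comm, ← mul_assoc]

end IsCenteredInverse

lemma lap_eq_diagonal_sub (A : Matrix (Fin n) (Fin n) ℝ) : lap A = diagonal (A *ᵥ 1) - A := by
  simp [lap, mulVec, dotProduct]

lemma lap_add (A B : Matrix (Fin n) (Fin n) ℝ) : lap (A + B) = lap A + lap B := by
  rw [lap_eq_diagonal_sub, lap_eq_diagonal_sub, lap_eq_diagonal_sub, sub_add_sub_comm,
    diagonal_add, add_mulVec]
  rfl

lemma starAdj_eq_vecMulVec {hub : Fin n} (hhub : hub.val = 0) :
    starAdj n = vecMulVec (Pi.single hub 1) 1 + vecMulVec 1 (Pi.single hub 1)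
      - (2 : ℝ) • vecMulVec (Pi.single hub 1) (Pi.single hub 1) := by
  have hval (k : Fin n) : k.val = 0 ↔ k = hub := by rw [Fin.ext_iff, hhub]
  ext i j
  simp only [starAdj, of_apply, hval, Matrix.add_apply, Matrix.sub_apply, Matrix.smul_apply,
    vecMulVec_apply, Pi.single_apply, Pi.one_apply, smul_eq_mul]
  grind

lemma lap_starAdj {hub : Fin n} (hhub : hub.val = 0) :
    lap (starAdj n) = 1 - vecMulVec (Pi.single hub 1) 1 - vecMulVec 1 (Pi.single hub 1)
      + (n : ℝ) • vecMulVec (Pi.single hub 1) (Pi.single hub 1) := by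
  rw [lap_eq_diagonal_sub, starAdj_eq_vecMulVec hhub]
  simp only [add_mulVec, sub_mulVec, smul_mulVec, vecMulVec_mulVec, op_smul_eq_smul,
    single_dotProduct, one_dotProduct_one, Pi.one_apply, one_mul, one_smul, Fintype.card_fin]
  ext i j
  simp only [diagonal_apply, Matrix.add_apply, Matrix.sub_apply, Matrix.smul_apply, one_apply,
    vecMulVec_apply, Pi.add_apply, Pi.sub_apply, Pi.smul_apply, Pi.one_apply, Pi.single_apply,
    smul_eq_mul]
  grind

lemma edgePert_eq_smul_vecMulVec {a b : Fin n} (hab : a ≠ b) (Δ : ℝ) :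
    edgePert a b Δ = Δ • (vecMulVec (Pi.single a 1) (Pi.single b 1)
      + vecMulVec (Pi.single b 1) (Pi.single a 1)) := by
  ext i j
  simp only [edgePert, of_apply, Matrix.add_apply, Matrix.smul_apply,
    vecMulVec_apply, Pi.single_apply]
  split_ifs <;> simp_all

lemma lap_edgePert {a b : Fin n} (hab : a ≠ b) (Δ : ℝ) :
    lap (edgePert a b Δ)
      = Δ • vecMulVec (Pi.single a 1 - Pi.single b 1) (Pi.single a 1 - Pi.single b 1) := by
  rw [lap_eq_diagonal_sub, edgePert_eq_smul_vecMulVec hab]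
  simp only [add_mulVec, smul_mulVec, vecMulVec_mulVec, op_smul_eq_smul,
    single_dotProduct, Pi.one_apply, one_mul, one_smul]
  ext i j
  simp only [diagonal_apply, Matrix.add_apply, Matrix.sub_apply, Matrix.smul_apply,
    vecMulVec_apply, Pi.add_apply, Pi.sub_apply, Pi.smul_apply, Pi.single_apply, smul_eq_mul]
  grind

noncomputable def starPinv (n : ℕ) (hub : Fin n) : Matrix (Fin n) (Fin n) ℝ :=
  1 - (((n : ℝ) + 1) / (n : ℝ) ^ 2) • vecMulVec 1 1
    + (n : ℝ)⁻¹ • (vecMulVec (Pi.single hub 1) 1 + vecMulVec 1 (Pi.single hub 1))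
    - vecMulVec (Pi.single hub 1) (Pi.single hub 1)

theorem isCenteredInverse_starPinv {hub : Fin n} (hhub : hub.val = 0) :
    IsCenteredInverse (lap (starAdj n)) (starPinv n hub) := by
  have hn : (n : ℝ) ≠ 0 := Nat.cast_ne_zero.mpr (Fin.pos hub).ne'
  rw [lap_starAdj hhub]
  constructor
  · simp only [transpose_add, transpose_sub, transpose_smul, transpose_one, transpose_vecMulVec]
    rw [sub_right_comm]
  · simp only [starPinv, transpose_add, transpose_sub, transpose_smul, transpose_one,
      transpose_vecMulVec, add_comm (vecMulVec 1 _)]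
  · simp only [starPinv, mul_sub, sub_mul, mul_add, add_mul, mul_one, one_mul, Matrix.mul_smul,
      Matrix.smul_mul, vecMulVec_mul_vecMulVec, vecMulVec_smul, single_dotProduct,
      dotProduct_single, one_dotProduct_one, Pi.one_apply, Pi.single_eq_same, Fintype.card_fin,
      smul_smul]
    match_scalars <;> field_simp <;> ring
  · simp only [add_mulVec, sub_mulVec, one_mulVec, smul_mulVec, vecMulVec_mulVec, op_smul_eq_smul,
      single_dotProduct, one_dotProduct_one, Pi.one_apply, Fintype.card_fin]
    module
  · simp only [starPinv, add_mulVec, sub_mulVec, one_mulVec, smul_mulVec, vecMulVec_mulVec,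
      op_smul_eq_smul, single_dotProduct, one_dotProduct_one, Pi.one_apply, Fintype.card_fin]
    match_scalars <;> field_simp <;> ring

lemma starPinv_mulVec_single_sub_single {hub a b : Fin n} (ha : a ≠ hub) (hb : b ≠ hub) :
    starPinv n hub *ᵥ (Pi.single a 1 - Pi.single b 1) = Pi.single a 1 - Pi.single b 1 := by
  simp only [starPinv, add_mulVec, sub_mulVec, one_mulVec, smul_mulVec, vecMulVec_mulVec,
    op_smul_eq_smul, dotProduct_sub, dotProduct_single, Pi.one_apply, Pi.single_eq_of_ne ha,
    Pi.single_eq_of_ne hb]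
  module

lemma starPinv_mulVec_hub_sub_single {hub a : Fin n} (ha : a ≠ hub) :
    starPinv n hub *ᵥ (Pi.single hub 1 - Pi.single a 1) = (n : ℝ)⁻¹ • 1 - Pi.single a 1 := by
  have hn : (n : ℝ) ≠ 0 := Nat.cast_ne_zero.mpr (Fin.pos hub).ne'
  simp only [starPinv, add_mulVec, sub_mulVec, one_mulVec, smul_mulVec, vecMulVec_mulVec,
    op_smul_eq_smul, dotProduct_sub, dotProduct_single, Pi.one_apply, Pi.single_eq_same,
    Pi.single_eq_of_ne ha]
  match_scalars <;> field_simp <;> ring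

theorem sum_abs_effR_sub_starAdj_add_edgePert_hub {hub a : Fin n} (hhub : hub.val = 0)
    (ha : a ≠ hub) {Δ : ℝ} (hΔ : -1 < Δ) {Ld Ld' : Matrix (Fin n) (Fin n) ℝ}
    (hLd : IsMoorePenrose (lap (starAdj n)) Ld)
    (hLd' : IsMoorePenrose (lap (starAdj n + edgePert hub a Δ)) Ld') :
    ∑ i, ∑ j, |effR Ld i j - effR Ld' i j| = 2 * (n - 1) * |Δ| / (1 + Δ) := by
  have hn : (n : ℝ) ≠ 0 := Nat.cast_ne_zero.mpr (Fin.pos hub).ne'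
  set u : Fin n → ℝ := Pi.single hub 1 - Pi.single a 1
  set v : Fin n → ℝ := (n : ℝ)⁻¹ • 1 - Pi.single a 1
  have hu : 1 ⬝ᵥ u = 0 := by simp [u]
  have huv : u ⬝ᵥ v = 1 := by
    simp [u, v, dotProduct_sub, sub_dotProduct, Pi.single_eq_of_ne ha]
  have hvv : v ⬝ᵥ v = 1 - (n : ℝ)⁻¹ := by
    simp [v, dotProduct_sub, sub_dotProduct]
    field_simp
    ring
  have hΔu : 1 + Δ * (u ⬝ᵥ starPinv n hub *ᵥ u) ≠ 0 := by
    rw [starPinv_mulVec_hub_sub_single ha, huv]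
    linarith
  rw [lap_add, lap_edgePert ha.symm] at hLd'
  rw [(isCenteredInverse_starPinv hhub).sum_abs_effR_sub_add_smul_vecMulVec hu hΔu hLd hLd',
    starPinv_mulVec_hub_sub_single ha, huv, hvv, mul_one, abs_div,
    abs_of_pos (show 0 < 1 + Δ by linarith)]
  field_simp

theorem sum_abs_effR_sub_starAdj_add_edgePert_leaf {hub a b : Fin n} (hhub : hub.val = 0)
    (ha : a ≠ hub) (hb : b ≠ hub) (hab : a ≠ b) {Δ : ℝ} (hΔ : 0 ≤ Δ)
    {Ld Ld' : Matrix (Fin n) (Fin n) ℝ} (hLd : IsMoorePenrose (lap (starAdj n)) Ld)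
    (hLd' : IsMoorePenrose (lap (starAdj n + edgePert a b Δ)) Ld') :
    ∑ i, ∑ j, |effR Ld i j - effR Ld' i j| = 4 * n * Δ / (1 + 2 * Δ) := by
  set u : Fin n → ℝ := Pi.single a 1 - Pi.single b 1
  have hu : 1 ⬝ᵥ u = 0 := by simp [u]
  have huu : u ⬝ᵥ u = 2 := by
    simp [u, dotProduct_sub, Pi.single_eq_of_ne hab, Pi.single_eq_of_ne hab.symm]
    norm_num
  have hΔu : 1 + Δ * (u ⬝ᵥ starPinv n hub *ᵥ u) ≠ 0 := by
    rw [starPinv_mulVec_single_sub_single ha hb, huu]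
    positivity
  rw [lap_add, lap_edgePert hab] at hLd'
  rw [(isCenteredInverse_starPinv hhub).sum_abs_effR_sub_add_smul_vecMulVec hu hΔu hLd hLd',
    starPinv_mulVec_single_sub_single ha hb, huu, abs_of_nonneg (by positivity)]
  field_simp
  ring

end

theorem rp1_star_graph_general (n : ℕ)
    (hub i₀ j₀ : Fin n) (hhub : hub.val = 0)
    (hi₀ : i₀ ≠ hub) (hj₀ : j₀ ≠ hub) (hij : i₀ ≠ j₀)
    (Δ : ℝ) (hΔ : -1 < Δ) (Δ' : ℝ) (hΔ' : 0 ≤ Δ')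
    (Ld Ld₂ Ld₃ : Matrix (Fin n) (Fin n) ℝ)
    (hMP : IsMoorePenrose (lap (starAdj n)) Ld)
    (hMP₂ : IsMoorePenrose (lap (starAdj n + edgePert hub i₀ Δ)) Ld₂)
    (hMP₃ : IsMoorePenrose (lap (starAdj n + edgePert i₀ j₀ Δ')) Ld₃) :
    (∑ i, ∑ j, |effR Ld i j - effR Ld₂ i j| = 2 * (n - 1) * |Δ| / (1 + Δ))
    ∧ (∑ i, ∑ j, |effR Ld i j - effR Ld₃ i j| = 4 * n * Δ' / (1 + 2 * Δ')) :=
  ⟨sum_abs_effR_sub_starAdj_add_edgePert_hub hhub hi₀ hΔ hMP hMP₂,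
    sum_abs_effR_sub_starAdj_add_edgePert_leaf hhub hi₀ hj₀ hij hΔ' hMP hMP₃⟩

/-- For the star graph `S_n` (hub `1`, here the index-0 vertex): perturbing a hub–leaf
edge `[hub, i₀]` by `Δ > -1` gives RP-1 distance `2(n-1)|Δ|/(1+Δ)`, and adding an edge of
weight `Δ' ≥ 0` between two leaves `i₀, j₀` gives RP-1 distance `4nΔ'/(1+2Δ')`. -/
theorem rp1_star_graph (n : ℕ) (hn : 3 ≤ n)
    (hub i₀ j₀ : Fin n) (hhub : hub.val = 0)
    (hi₀ : i₀ ≠ hub) (hj₀ : j₀ ≠ hub) (hij : i₀ ≠ j₀)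
    (Δ : ℝ) (hΔ : -1 < Δ) (Δ' : ℝ) (hΔ' : 0 ≤ Δ')
    (Ld Ld₂ Ld₃ : Matrix (Fin n) (Fin n) ℝ)
    (hMP : IsMoorePenrose (lap (starAdj n)) Ld)
    (hMP₂ : IsMoorePenrose (lap (starAdj n + edgePert hub i₀ Δ)) Ld₂)
    (hMP₃ : IsMoorePenrose (lap (starAdj n + edgePert i₀ j₀ Δ')) Ld₃) :
    (∑ i, ∑ j, |effR Ld i j - effR Ld₂ i j| = 2 * (n - 1) * |Δ| / (1 + Δ))
    ∧ (∑ i, ∑ j, |effR Ld i j - effR Ld₃ i j| = 4 * n * Δ' / (1 + 2 * Δ')) :=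
  rp1_star_graph_general n hub i₀ j₀ hhub hi₀ hj₀ hij Δ hΔ Δ' hΔ' Ld Ld₂ Ld₃ hMP hMP₂ hMP₃
end
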